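/- Fix m ∈ ℕ, an injective map N from the set of pairs {(a, b) : 1 ≤ a < b ≤ m} into the positive integers, and functions z_{ab} : ℝ → ℝ for a < b. Set ψ_K(τ) = √2 · K · cos(Kτ) for each positive integer K, and define the oscillatory inputs w_a(τ, t) = −Σ_{c=1}^{a−1} ψ_{N(c,a)}(τ) + Σ_{c=a+1}^m z_{ac}(t) ψ_{N(a,c)}(τ), which are 2π-periodic in τ. Then the averaged multinomial iterated integrals of w_1, …, w_m with period T = 2π satisfy, for every t: (i) Ū_{k⃗_a}(t) = 0 for each a ∈ {1, …, m}; (ii) Ū_{k⃗_{ab}}(t) = −z_{ab}(t) for each pair a < b; and (iii) Ū_{k⃗_{aa}}(t) = (1/2) ( (a − 1) + Σ_{c=a+1}^m z_{ac}(t)² ) for each a. -/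

import Mathlib

open scoped BigOperators Real

noncomputable section

/-- The averaged multinomial iterated integral
`Ū_{k_1,…,k_m}(t) = (1/(T k_1! ⋯ k_m!)) ∫_0^T Π_a (∫_0^s u_a(τ, t) dτ)^{k_a} ds`. -/
def avgIterInt (m : ℕ) (u : Fin m → ℝ → ℝ → ℝ) (T : ℝ) (k : Fin m → ℕ)
    (t : ℝ) : ℝ :=
  (T * ∏ a, (Nat.factorial (k a) : ℝ))⁻¹ *
    ∫ s in (0:ℝ)..T, ∏ a, (∫ τ in (0:ℝ)..s, u a τ t) ^ (k a)

/-- `ψ_K(τ) = √2 · K · cos(Kτ)`. -/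
def psiOsc (K : ℕ) (τ : ℝ) : ℝ := Real.sqrt 2 * (K : ℝ) * Real.cos ((K : ℝ) * τ)

/-- The oscillatory inputs
`w_a(τ, t) = −Σ_{c<a} ψ_{N(c,a)}(τ) + Σ_{c>a} z_{ac}(t) ψ_{N(a,c)}(τ)`. -/
def oscInput (m : ℕ) (N : Fin m → Fin m → ℕ) (z : Fin m → Fin m → ℝ → ℝ)
    (a : Fin m) (τ t : ℝ) : ℝ :=
  -(∑ c ∈ Finset.univ.filter (fun c => c < a), psiOsc (N c a) τ)
    + ∑ c ∈ Finset.univ.filter (fun c => a < c), z a c t * psiOsc (N a c) τ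

/-!
Integrating `ψ_K` gives the mode `√2 sin (K s)`, so `∫₀ˢ w_a = Σ_{c ≠ a} C_{ac} √2 sin (N_{ac} s)`
with `C_{ac} = -1` for `c < a`, `C_{ac} = z_{ac}` for `c > a`, and `N_{ac}` the frequency of the
pair `{a, c}`. On `[0, 2π]` the modes `√2 sin (K s)`, `K ≥ 1`, have mean zero and are orthonormal
for the mean. As `N` is injective on pairs, a mode of `∫ w_a` meets a mode of `∫ w_b` only through
the common pair `{a, b}` when `a ≠ b`, and only term by term when `a = b`. So the first-order
averages vanish, the mixed ones equal `C_{ab} C_{ba} = -z_{ab}`, and the diagonal ones are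
`½ Σ_{c ≠ a} C_{ac}²`.
-/

open MeasureTheory Finset

section avgIterInt

variable {m : ℕ} (u : Fin m → ℝ → ℝ → ℝ) (T t : ℝ)

lemma avgIterInt_single (a : Fin m) (n : ℕ) :
    avgIterInt m u T (Pi.single a n) t
      = (T * n.factorial)⁻¹ * ∫ s in (0:ℝ)..T, (∫ τ in (0:ℝ)..s, u a τ t) ^ n := by
  simp [avgIterInt, Pi.single_apply, apply_ite Nat.factorial]

lemma avgIterInt_single_add_single {a b : Fin m} (hab : a ≠ b) :
    avgIterInt m u T (Pi.single a 1 + Pi.single b 1) t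
      = T⁻¹ * ∫ s in (0:ℝ)..T, (∫ τ in (0:ℝ)..s, u a τ t) * ∫ τ in (0:ℝ)..s, u b τ t := by
  have hfact : ∀ c, ((if c = a then 1 else 0) + (if c = b then 1 else 0)).factorial = 1 := by
    intro c
    split_ifs <;> simp_all
  simp only [avgIterInt, Pi.add_apply, pow_add, prod_mul_distrib]
  simp [Pi.single_apply, hfact]

end avgIterInt

def sinMode (K : ℕ) (τ : ℝ) : ℝ := √2 * Real.sin (K * τ)

@[fun_prop]
lemma continuous_psiOsc (K : ℕ) : Continuous (psiOsc K) := by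
  unfold psiOsc; fun_prop

@[fun_prop]
lemma continuous_sinMode (K : ℕ) : Continuous (sinMode K) := by
  unfold sinMode; fun_prop

lemma integral_psiOsc (K : ℕ) (s : ℝ) : ∫ τ in (0:ℝ)..s, psiOsc K τ = sinMode K s := by
  have hderiv : ∀ τ, HasDerivAt (sinMode K) (psiOsc K τ) τ := fun τ =>
    ((((hasDerivAt_id τ).const_mul (K : ℝ)).sin).const_mul √2).congr_deriv
      (by simp only [psiOsc, id, mul_one]; ring)
  rw [intervalIntegral.integral_eq_sub_of_hasDerivAt (fun τ _ => hderiv τ)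
    ((continuous_psiOsc K).intervalIntegrable _ _)]
  simp [sinMode]

lemma integral_cos_int_mul_two_pi (n : ℤ) :
    ∫ τ in (0:ℝ)..2 * π, Real.cos (n * τ) = if n = 0 then 2 * π else 0 := by
  split_ifs with hn
  · simp [hn]
  · rw [intervalIntegral.integral_comp_mul_left Real.cos (Int.cast_ne_zero.mpr hn), integral_cos,
      show (n : ℝ) * (2 * π) = (2 * n : ℤ) * π by push_cast; ring, Real.sin_int_mul_pi]
    simp

lemma integral_sinMode_two_pi (K : ℕ) : ∫ τ in (0:ℝ)..2 * π, sinMode K τ = 0 := by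
  rcases eq_or_ne K 0 with rfl | hK
  · simp [sinMode]
  simp only [sinMode]
  rw [intervalIntegral.integral_const_mul,
    intervalIntegral.integral_comp_mul_left Real.sin (Nat.cast_ne_zero.mpr hK), integral_sin]
  simp [Real.cos_nat_mul_two_pi]

lemma integral_sinMode_mul_sinMode {K : ℕ} (hK : K ≠ 0) (L : ℕ) :
    ∫ τ in (0:ℝ)..2 * π, sinMode K τ * sinMode L τ = if K = L then 2 * π else 0 := by
  have hprod : ∀ τ, sinMode K τ * sinMode L τ
      = Real.cos (((K - L : ℤ) : ℝ) * τ) - Real.cos (((K + L : ℤ) : ℝ) * τ) := fun τ => by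
    push_cast
    rw [sub_mul, add_mul, Real.cos_sub, Real.cos_add, sinMode, sinMode]
    linear_combination (Real.sin (K * τ) * Real.sin (L * τ)) * Real.mul_self_sqrt zero_le_two
  have hcos : ∀ n : ℤ, IntervalIntegrable (fun τ => Real.cos (n * τ)) volume 0 (2 * π) :=
    fun n => (by fun_prop : Continuous fun τ : ℝ => Real.cos (n * τ)).intervalIntegrable _ _
  simp only [hprod]
  rw [intervalIntegral.integral_sub (hcos _) (hcos _), integral_cos_int_mul_two_pi,
    integral_cos_int_mul_two_pi, if_neg (by omega : (K + L : ℤ) ≠ 0), sub_zero]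
  simp only [sub_eq_zero, Nat.cast_inj]

section sineSums

variable {ι κ : Type*} (s : Finset ι) (s' : Finset κ) (x : ι → ℝ) (y : κ → ℝ) (K : ι → ℕ)
  (L : κ → ℕ)

lemma integral_sum_sinMode_two_pi :
    ∫ τ in (0:ℝ)..2 * π, ∑ i ∈ s, x i * sinMode (K i) τ = 0 := by
  rw [intervalIntegral.integral_finsetSum fun i _ =>
    (by fun_prop : Continuous fun τ => x i * sinMode (K i) τ).intervalIntegrable _ _]
  simp [intervalIntegral.integral_const_mul, integral_sinMode_two_pi]

lemma integral_sum_sinMode_mul_sum_sinMode (hK : ∀ i ∈ s, K i ≠ 0) :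
    ∫ τ in (0:ℝ)..2 * π, (∑ i ∈ s, x i * sinMode (K i) τ) * ∑ j ∈ s', y j * sinMode (L j) τ
      = 2 * π * ∑ i ∈ s, ∑ j ∈ s', if K i = L j then x i * y j else 0 := by
  simp only [sum_mul_sum, mul_mul_mul_comm (x _)]
  rw [intervalIntegral.integral_finsetSum fun i _ => (by fun_prop : Continuous fun τ =>
    ∑ j ∈ s', x i * y j * (sinMode (K i) τ * sinMode (L j) τ)).intervalIntegrable _ _, mul_sum]
  refine sum_congr rfl fun i hi => ?_
  rw [intervalIntegral.integral_finsetSum fun j _ => (by fun_prop : Continuous fun τ =>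
    x i * y j * (sinMode (K i) τ * sinMode (L j) τ)).intervalIntegrable _ _, mul_sum]
  refine sum_congr rfl fun j _ => ?_
  rw [intervalIntegral.integral_const_mul, integral_sinMode_mul_sinMode (hK i hi)]
  split_ifs <;> ring

end sineSums

lemma Finset.sum_erase_eq_sum_lt_add_sum_gt {α M : Type*} [LinearOrder α] [Fintype α]
    [AddCommMonoid M] (a : α) (f : α → M) :
    ∑ c ∈ univ.erase a, f c
      = ∑ c ∈ univ.filter (fun c => c < a), f c + ∑ c ∈ univ.filter (fun c => a < c), f c := by
  rw [← sum_union (disjoint_filter.mpr fun c _ hca hac => hca.asymm hac)]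
  congr 1
  ext c
  simp only [mem_erase, mem_union, mem_filter, mem_univ, and_true, true_and]
  exact ne_iff_lt_or_gt.trans (or_congr_right gt_iff_lt)

section pairs

variable {m : ℕ} (N : Fin m → Fin m → ℕ)

def pairFreq (a c : Fin m) : ℕ := N (min a c) (max a c)

def pairCoeff (z : Fin m → Fin m → ℝ → ℝ) (t : ℝ) (a c : Fin m) : ℝ :=
  if c < a then -1 else z a c t

lemma pairFreq_ne_zero (hNpos : ∀ a b : Fin m, a < b → 0 < N a b) {a c : Fin m} (hc : c ≠ a) :
    pairFreq N a c ≠ 0 :=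
  (hNpos _ _ (min_lt_max.mpr hc.symm)).ne'

lemma pairFreq_eq_pairFreq
    (hNinj : ∀ a b a' b' : Fin m, a < b → a' < b' → N a b = N a' b' → a = a' ∧ b = b')
    {a b c d : Fin m} (hc : c ≠ a) (hd : d ≠ b) (h : pairFreq N a c = pairFreq N b d) :
    (a = b ∧ c = d) ∨ (a = d ∧ c = b) := by
  obtain ⟨hmin, hmax⟩ := hNinj _ _ _ _ (min_lt_max.mpr hc.symm) (min_lt_max.mpr hd.symm) h
  grind

lemma oscInput_eq_sum (z : Fin m → Fin m → ℝ → ℝ) (a : Fin m) (τ t : ℝ) :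
    oscInput m N z a τ t = ∑ c ∈ univ.erase a, pairCoeff z t a c * psiOsc (pairFreq N a c) τ := by
  rw [sum_erase_eq_sum_lt_add_sum_gt, oscInput, ← sum_neg_distrib]
  congr 1 <;> refine sum_congr rfl fun c hc => ?_ <;> have hc := (mem_filter.mp hc).2
  · simp [pairCoeff, pairFreq, hc, hc.le]
  · simp [pairCoeff, pairFreq, hc.not_gt, hc.le]

lemma integral_oscInput (z : Fin m → Fin m → ℝ → ℝ) (a : Fin m) (s t : ℝ) :
    ∫ τ in (0:ℝ)..s, oscInput m N z a τ t
      = ∑ c ∈ univ.erase a, pairCoeff z t a c * sinMode (pairFreq N a c) s := by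
  simp only [oscInput_eq_sum]
  rw [intervalIntegral.integral_finsetSum fun c _ => (by fun_prop : Continuous fun τ =>
    pairCoeff z t a c * psiOsc (pairFreq N a c) τ).intervalIntegrable _ _]
  simp [intervalIntegral.integral_const_mul, integral_psiOsc]

lemma sum_sum_ite_pairFreq_eq_of_ne
    (hNinj : ∀ a b a' b' : Fin m, a < b → a' < b' → N a b = N a' b' → a = a' ∧ b = b')
    {a b : Fin m} (hab : a ≠ b) (x y : Fin m → ℝ) :
    ∑ c ∈ univ.erase a, ∑ d ∈ univ.erase b,
        (if pairFreq N a c = pairFreq N b d then x c * y d else 0) = x b * y a := by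
  rw [sum_eq_single_of_mem b (mem_erase.mpr ⟨hab.symm, mem_univ b⟩) fun c hc hcb => ?_,
    sum_eq_single_of_mem a (mem_erase.mpr ⟨hab, mem_univ a⟩) fun d hd hda => ?_, if_pos]
  · simp [pairFreq, min_comm, max_comm]
  · refine if_neg fun h => ?_
    have := pairFreq_eq_pairFreq N hNinj hab.symm (ne_of_mem_erase hd) h
    tauto
  · refine sum_eq_zero fun d hd => if_neg fun h => ?_
    have := pairFreq_eq_pairFreq N hNinj (ne_of_mem_erase hc) (ne_of_mem_erase hd) h
    tauto

lemma sum_sum_ite_pairFreq_eq_self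
    (hNinj : ∀ a b a' b' : Fin m, a < b → a' < b' → N a b = N a' b' → a = a' ∧ b = b')
    (a : Fin m) (x y : Fin m → ℝ) :
    ∑ c ∈ univ.erase a, ∑ d ∈ univ.erase a,
        (if pairFreq N a c = pairFreq N a d then x c * y d else 0)
      = ∑ c ∈ univ.erase a, x c * y c := by
  refine sum_congr rfl fun c hc => ?_
  rw [sum_eq_single_of_mem c hc fun d hd hdc => if_neg fun h => ?_, if_pos rfl]
  rcases pairFreq_eq_pairFreq N hNinj (ne_of_mem_erase hc) (ne_of_mem_erase hd) h
    with ⟨-, rfl⟩ | ⟨rfl, -⟩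
  exacts [hdc rfl, ne_of_mem_erase hd rfl]

lemma sum_pairCoeff_sq (z : Fin m → Fin m → ℝ → ℝ) (t : ℝ) (a : Fin m) :
    ∑ c ∈ univ.erase a, pairCoeff z t a c * pairCoeff z t a c
      = (a : ℕ) + ∑ c ∈ univ.filter (fun c => a < c), z a c t ^ 2 := by
  rw [sum_erase_eq_sum_lt_add_sum_gt]
  congr 1
  · rw [sum_congr rfl fun c hc => show pairCoeff z t a c * pairCoeff z t a c = 1 by
      simp [pairCoeff, (mem_filter.mp hc).2], sum_const,
      filter_gt_eq_Iio, Fin.card_Iio, nsmul_one]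
  · exact sum_congr rfl fun c hc => by simp [pairCoeff, (mem_filter.mp hc).2.not_gt, sq]

end pairs

/-- for the oscillatory inputs built from the `ψ_K`'s via an
injective enumeration `N` of the pairs `a < b`, the averaged multinomial
iterated integrals (with period `2π`) satisfy `Ū_{k⃗_a} = 0`,
`Ū_{k⃗_{ab}} = −z_{ab}` for `a < b`, and
`Ū_{k⃗_{aa}} = (1/2)((a−1) + Σ_{c>a} z_{ac}²)`. -/
theorem avgIterInt_of_oscInputs (m : ℕ)
    (N : Fin m → Fin m → ℕ)
    (hNpos : ∀ a b : Fin m, a < b → 0 < N a b)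
    (hNinj : ∀ a b a' b' : Fin m, a < b → a' < b' →
      N a b = N a' b' → a = a' ∧ b = b')
    (z : Fin m → Fin m → ℝ → ℝ) (t : ℝ) :
    (∀ a : Fin m,
      avgIterInt m (oscInput m N z) (2 * π) (Pi.single a 1) t = 0) ∧
    (∀ a b : Fin m, a < b →
      avgIterInt m (oscInput m N z) (2 * π)
        (Pi.single a 1 + Pi.single b 1) t = -(z a b t)) ∧
    (∀ a : Fin m,
      avgIterInt m (oscInput m N z) (2 * π)
        (Pi.single a 1 + Pi.single a 1) t
      = (1/2) * (((a : ℕ) : ℝ)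
          + ∑ c ∈ Finset.univ.filter (fun c => a < c), (z a c t) ^ 2)) := by
  have hfreq : ∀ a, ∀ c ∈ univ.erase a, pairFreq N a c ≠ 0 :=
    fun a c hc => pairFreq_ne_zero N hNpos (ne_of_mem_erase hc)
  refine ⟨fun a => ?_, fun a b hab => ?_, fun a => ?_⟩
  · rw [avgIterInt_single]
    simp only [integral_oscInput, pow_one]
    rw [integral_sum_sinMode_two_pi, mul_zero]
  · rw [avgIterInt_single_add_single _ _ _ hab.ne]
    simp only [integral_oscInput]
    rw [integral_sum_sinMode_mul_sum_sinMode _ _ _ _ _ _ (hfreq a),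
      sum_sum_ite_pairFreq_eq_of_ne N hNinj hab.ne]
    simp only [pairCoeff, hab, hab.not_gt, if_true, if_false]
    field_simp
  · rw [← Pi.single_add, one_add_one_eq_two, avgIterInt_single]
    simp only [integral_oscInput, sq (∑ _ ∈ _, _ : ℝ)]
    rw [integral_sum_sinMode_mul_sum_sinMode _ _ _ _ _ _ (hfreq a),
      sum_sum_ite_pairFreq_eq_self N hNinj, sum_pairCoeff_sq, Nat.factorial_two, Nat.cast_two]
    field_simp

end
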